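/- Let (α, N, B, κ_g, τ_g) be a Frenet apparatus of a timelike unit speed non-geodesic curve in S³₁ and let p ∈ S³₁ (so ⟨p,p⟩ = 1) satisfy ⟨p, N(s)⟩ = 0 for all s ∈ ℝ. Then there exist constants m₁, m₂ ∈ ℝ with m₂² − m₁² ≤ 1 such that ⟨p, α(s)⟩ = m₁·sinh(s) + m₂·cosh(s) for all s ∈ ℝ. -/

import Mathlib

open Real

/-- The Minkowski scalar product on `ℝ⁴₁`:
`⟨x,y⟩ = -x₁y₁ + x₂y₂ + x₃y₃ + x₄y₄`. -/
noncomputable def mdot (x y : Fin 4 → ℝ) : ℝ :=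
  -(x 0 * y 0) + x 1 * y 1 + x 2 * y 2 + x 3 * y 3

/-!
Writing `F s = ⟨p, α s⟩`, the Frenet equation `α'' = α + κ_g N` and `⟨p, N⟩ = 0` give
`F'' = F`, so `F = F'(0) sinh + F(0) cosh`. For the inequality, the projection
`r = p - F(0) α(0) + F'(0) T(0)` of `p` onto the orthogonal complement of the Lorentzian plane
spanned by `α(0)` and `T(0)` is spacelike or zero, and `⟨r, r⟩ = 1 - F(0)² + F'(0)²`.
-/

lemma mdot_comm (x y : Fin 4 → ℝ) : mdot x y = mdot y x := by
  simp only [mdot]; ring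

lemma mdot_add_left (x y z : Fin 4 → ℝ) : mdot (x + y) z = mdot x z + mdot y z := by
  simp only [mdot, Pi.add_apply]; ring

lemma mdot_sub_left (x y z : Fin 4 → ℝ) : mdot (x - y) z = mdot x z - mdot y z := by
  simp only [mdot, Pi.sub_apply]; ring

lemma mdot_smul_left (c : ℝ) (x y : Fin 4 → ℝ) : mdot (c • x) y = c * mdot x y := by
  simp only [mdot, Pi.smul_apply, smul_eq_mul]; ring

lemma mdot_add_right (x y z : Fin 4 → ℝ) : mdot x (y + z) = mdot x y + mdot x z := by
  simp only [mdot, Pi.add_apply]; ring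

lemma mdot_sub_right (x y z : Fin 4 → ℝ) : mdot x (y - z) = mdot x y - mdot x z := by
  simp only [mdot, Pi.sub_apply]; ring

lemma mdot_smul_right (c : ℝ) (x y : Fin 4 → ℝ) : mdot x (c • y) = c * mdot x y := by
  simp only [mdot, Pi.smul_apply, smul_eq_mul]; ring

lemma HasDerivAt.mdot_left (p : Fin 4 → ℝ) {f : ℝ → Fin 4 → ℝ} {f' : Fin 4 → ℝ} {s : ℝ}
    (hf : HasDerivAt f f' s) :
    HasDerivAt (fun t => mdot p (f t)) (mdot p f') s := by
  have h := hasDerivAt_pi.mp hf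
  simp only [mdot]
  exact (((((h 0).const_mul (p 0)).neg).add ((h 1).const_mul (p 1))).add
    ((h 2).const_mul (p 2))).add ((h 3).const_mul (p 3))

lemma mdot_self_nonneg_of_mdot_eq_zero {t r : Fin 4 → ℝ} (ht : mdot t t < 0)
    (hrt : mdot r t = 0) : 0 ≤ mdot r r := by
  simp only [mdot] at *
  by_contra! h
  have hw : 0 ≤ r 1 ^ 2 + r 2 ^ 2 + r 3 ^ 2 := by positivity
  have hv : 0 ≤ t 1 ^ 2 + t 2 ^ 2 + t 3 ^ 2 := by positivity
  have hrt' : r 0 * t 0 = r 1 * t 1 + r 2 * t 2 + r 3 * t 3 := by linarith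
  -- `(r₀² - |w|²)(t₀² - |v|²) > 0` forces `(r₀ t₀)² > |w|²|v|²`, against Cauchy–Schwarz for
  -- the spatial parts `w`, `v` (in Lagrange's form)
  linarith [sq_nonneg (r 1 * t 2 - r 2 * t 1), sq_nonneg (r 1 * t 3 - r 3 * t 1),
    sq_nonneg (r 2 * t 3 - r 3 * t 2), mul_pos (neg_pos.mpr h) (neg_pos.mpr ht),
    mul_nonneg (neg_pos.mpr h).le hv, mul_nonneg (neg_pos.mpr ht).le hw,
    congrArg (· ^ 2) hrt']

lemma mdot_sq_sub_mdot_sq_le {x t : Fin 4 → ℝ} (hx : mdot x x = 1) (ht : mdot t t = -1)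
    (hxt : mdot x t = 0) (p : Fin 4 → ℝ) :
    mdot p x ^ 2 - mdot p t ^ 2 ≤ mdot p p := by
  set r := p - mdot p x • x + mdot p t • t
  have hrt : mdot r t = 0 := by
    simp only [r, mdot_add_left, mdot_sub_left, mdot_smul_left, hxt, ht]
    ring
  have hrr : mdot r r = mdot p p - mdot p x ^ 2 + mdot p t ^ 2 := by
    simp only [r, mdot_add_left, mdot_sub_left, mdot_smul_left, mdot_add_right,
      mdot_sub_right, mdot_smul_right, hx, ht, hxt]
    rw [mdot_comm x p, mdot_comm t p, mdot_comm t x, hxt]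
    ring
  linarith [mdot_self_nonneg_of_mdot_eq_zero (by linarith) hrt]

lemma eq_mul_exp_of_hasDerivAt {f : ℝ → ℝ} {c : ℝ} (hf : ∀ t, HasDerivAt f (c * f t) t)
    (t : ℝ) : f t = f 0 * exp (c * t) := by
  have hg : ∀ t, HasDerivAt (fun t => f t * exp (-c * t)) 0 t := fun t =>
    ((hf t).mul ((hasDerivAt_id t).const_mul (-c)).exp).congr_deriv (by simp only [id]; ring)
  have hconst := is_const_of_deriv_eq_zero (fun t => (hg t).differentiableAt)
    (fun t => (hg t).deriv) t 0
  simp only [mul_zero, exp_zero, mul_one] at hconst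
  rw [← hconst, mul_assoc, ← exp_add, neg_mul, neg_add_cancel, exp_zero, mul_one]

lemma eq_sinh_cosh_of_hasDerivAt {F G : ℝ → ℝ} (hF : ∀ t, HasDerivAt F (G t) t)
    (hG : ∀ t, HasDerivAt G (F t) t) (s : ℝ) : F s = G 0 * sinh s + F 0 * cosh s := by
  have hsum := eq_mul_exp_of_hasDerivAt (f := F + G) (c := 1)
    (fun t => by simpa [add_comm] using (hF t).add (hG t)) s
  have hdiff := eq_mul_exp_of_hasDerivAt (f := F - G) (c := -1)
    (fun t => by simpa using (hF t).sub (hG t)) s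
  simp only [Pi.add_apply, Pi.sub_apply, one_mul, neg_one_mul] at hsum hdiff
  rw [sinh_eq, cosh_eq]
  linear_combination (hsum + hdiff) / 2

theorem support_of_timelike_rectifying_curve_general
    (α N : ℝ → Fin 4 → ℝ) (κg : ℝ → ℝ)
    (hαsm : ContDiff ℝ (⊤ : ℕ∞) α)
    (hα1 : ∀ s, mdot (α s) (α s) = 1)
    (hT1 : ∀ s, mdot (deriv α s) (deriv α s) = -1)
    (hαT : ∀ s, mdot (α s) (deriv α s) = 0)
    (hF1 : ∀ s, deriv (deriv α) s = α s + κg s • N s)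
    (p : Fin 4 → ℝ) (hp : mdot p p = 1)
    (hrect : ∀ s, mdot p (N s) = 0) :
    ∃ m₁ m₂ : ℝ, m₂ ^ 2 - m₁ ^ 2 ≤ 1 ∧
      ∀ s, mdot p (α s) = m₁ * Real.sinh s + m₂ * Real.cosh s := by
  have hα : Differentiable ℝ α := hαsm.differentiable (by simp)
  have hT : Differentiable ℝ (deriv α) :=
    (contDiff_infty_iff_deriv.mp hαsm).2.differentiable (by simp)
  refine ⟨mdot p (deriv α 0), mdot p (α 0), ?_, fun s => ?_⟩
  · simpa [hp] using mdot_sq_sub_mdot_sq_le (hα1 0) (hT1 0) (hαT 0) p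
  · refine eq_sinh_cosh_of_hasDerivAt (fun t => (hα t).hasDerivAt.mdot_left p) (fun t => ?_) s
    have h := (hT t).hasDerivAt.mdot_left p
    rwa [hF1 t, mdot_add_right, mdot_smul_right, hrect t, mul_zero, add_zero] at h

/-- For a timelike rectifying curve in `S³₁` with respect to `p ∈ S³₁`, the support
function `⟨p, α⟩` is of the form `m₁ sinh s + m₂ cosh s` with `m₂² - m₁² ≤ 1`. -/
theorem support_of_timelike_rectifying_curve
    (α N B : ℝ → Fin 4 → ℝ) (κg τg : ℝ → ℝ)
    (hαsm : ContDiff ℝ (⊤ : ℕ∞) α) (hNsm : ContDiff ℝ (⊤ : ℕ∞) N)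
    (hBsm : ContDiff ℝ (⊤ : ℕ∞) B)
    (hκsm : ContDiff ℝ (⊤ : ℕ∞) κg) (hτsm : ContDiff ℝ (⊤ : ℕ∞) τg)
    (hκpos : ∀ s, 0 < κg s)
    (hα1 : ∀ s, mdot (α s) (α s) = 1)
    (hT1 : ∀ s, mdot (deriv α s) (deriv α s) = -1)
    (hN1 : ∀ s, mdot (N s) (N s) = 1)
    (hB1 : ∀ s, mdot (B s) (B s) = 1)
    (hαT : ∀ s, mdot (α s) (deriv α s) = 0)
    (hαN : ∀ s, mdot (α s) (N s) = 0)
    (hαB : ∀ s, mdot (α s) (B s) = 0)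
    (hTN : ∀ s, mdot (deriv α s) (N s) = 0)
    (hTB : ∀ s, mdot (deriv α s) (B s) = 0)
    (hNB : ∀ s, mdot (N s) (B s) = 0)
    (hF1 : ∀ s, deriv (deriv α) s = α s + κg s • N s)
    (hF2 : ∀ s, deriv N s = κg s • deriv α s + τg s • B s)
    (hF3 : ∀ s, deriv B s = -τg s • N s)
    (p : Fin 4 → ℝ) (hp : mdot p p = 1)
    (hrect : ∀ s, mdot p (N s) = 0) :
    ∃ m₁ m₂ : ℝ, m₂ ^ 2 - m₁ ^ 2 ≤ 1 ∧
      ∀ s, mdot p (α s) = m₁ * Real.sinh s + m₂ * Real.cosh s :=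
  support_of_timelike_rectifying_curve_general α N κg hαsm hα1 hT1 hαT hF1 p hp hrect
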